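/- Assume N ≥ 5, M ≥ 5, and let W = {(i,j) ∈ V : i₀ ≤ i < i₀ + N₁, j₀ ≤ j < j₀ + M₁} (indices taken modulo N and M) be a rectangular set of nodes frozen at cooperation, where N₁ ∈ [2, N−3] ∪ {N} and M₁ ∈ [2, M−3] ∪ {M} are integers. Assume that either (i) p3 > p1 > p4 > p2 and 2p1 + 2p2 > p3 + 3p4, or (ii) p3 > p1 > p2 > p4 and 2p3 + 2p4 > 2p1 + 2p2 > p3 + 3p4 > 4p2. Let S* be the configuration with S*(v) = C for v ∈ W and S*(v) = D for v ∉ W. Then the singleton {S_C} is reachable from S* under the W-frozen CEG within ⌈(N − N₁)/2⌉ + ⌈(M − M₁)/2⌉ steps. -/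

import Mathlib

open MeasureTheory

namespace EvolGame

/-- A strategy: cooperation `C` or defection `D`. -/
inductive Strat : Type
  | C : Strat
  | D : Strat
  deriving DecidableEq

/-- Node set of the toroidal grid `G_{N,M}`. -/
abbrev Node (N M : ℕ) := ZMod N × ZMod M

/-- A strategy configuration. -/
abbrev Config (N M : ℕ) := Node N M → Strat

/-- Adjacency on the toroidal grid. -/
def adj {N M : ℕ} (u v : Node N M) : Prop :=
  u - v = (1, 0) ∨ u - v = (-1, 0) ∨ u - v = (0, 1) ∨ u - v = (0, -1)

/-- The (at most four) neighbors of a node. -/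
def neighbors {N M : ℕ} (v : Node N M) : Finset (Node N M) :=
  {v + (1, 0), v + (-1, 0), v + (0, 1), v + (0, -1)}

/-- Number of cooperating neighbors of `v` under configuration `S`. -/
def coopCount {N M : ℕ} (S : Config N M) (v : Node N M) : ℕ :=
  ((neighbors v).filter (fun u => S u = Strat.C)).card

/-- Payoff of node `v` under configuration `S` with payoff parameters `p1,p2,p3,p4`. -/
def payoff (p1 p2 p3 p4 : ℝ) {N M : ℕ} (S : Config N M) (v : Node N M) : ℝ :=
  if S v = Strat.C then
    (coopCount S v : ℝ) * p1 + (4 - (coopCount S v : ℝ)) * p2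
  else
    (coopCount S v : ℝ) * p3 + (4 - (coopCount S v : ℝ)) * p4

/-- A control assigns to each node one of its neighbors. -/
def IsControl {N M : ℕ} (c : Node N M → Node N M) : Prop :=
  ∀ v, adj (c v) v

open Classical in
/-- The controlled update `F(S,c)`. -/
noncomputable def F (p1 p2 p3 p4 : ℝ) {N M : ℕ} (S : Config N M)
    (c : Node N M → Node N M) : Config N M :=
  fun v =>
    if payoff p1 p2 p3 p4 S v < payoff p1 p2 p3 p4 S (c v) then S (c v) else S v

/-- The set `R(S)` of configurations reachable from `S` in one imitation step. -/
def Rset (p1 p2 p3 p4 : ℝ) {N M : ℕ} (S : Config N M) : Set (Config N M) :=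
  {S' | ∀ v, S' v = S v ∨
    ∃ u, adj u v ∧ S' v = S u ∧ payoff p1 p2 p3 p4 S v < payoff p1 p2 p3 p4 S u}

/-- `Ω*`: adjacent nodes with different strategies have equal payoffs. -/
def OmegaStar (p1 p2 p3 p4 : ℝ) (N M : ℕ) : Set (Config N M) :=
  {S | ∀ u v, adj u v → S u ≠ S v →
    payoff p1 p2 p3 p4 S u = payoff p1 p2 p3 p4 S v}

/-- Controlled trajectory of the CEG. -/
noncomputable def traj (p1 p2 p3 p4 : ℝ) {N M : ℕ} (S0 : Config N M)
    (c : ℕ → Node N M → Node N M) : ℕ → Config N M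
  | 0 => S0
  | t + 1 => F p1 p2 p3 p4 (traj p1 p2 p3 p4 S0 c t) (c t)

/-- `A` is reachable from `S0` under the CEG within `T` steps. -/
def ReachableWithin (p1 p2 p3 p4 : ℝ) {N M : ℕ} (A : Set (Config N M))
    (S0 : Config N M) (T : ℕ) : Prop :=
  ∃ t ≤ T, ∃ c : ℕ → Node N M → Node N M,
    (∀ s, IsControl (c s)) ∧ traj p1 p2 p3 p4 S0 c t ∈ A

/-- The discrete σ-algebra on the finite configuration space. -/
instance {N M : ℕ} : MeasurableSpace (Config N M) := ⊤

/-- `μ` is the law of the time-homogeneous Markov chain with kernel `κ` started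
at `S0`, characterized by its finite-dimensional (cylinder) distributions. -/
def IsChainLaw {N M : ℕ} (κ : Config N M → PMF (Config N M)) (S0 : Config N M)
    (μ : Measure (ℕ → Config N M)) : Prop :=
  IsProbabilityMeasure μ ∧
  ∀ (t : ℕ) (s : ℕ → Config N M), s 0 = S0 →
    μ {ω | ∀ i ≤ t, ω i = s i} = ∏ i ∈ Finset.range t, κ (s i) (s (i + 1))

/-- An admissible imitation kernel with margin `ε`. -/
def IsAdmissible (p1 p2 p3 p4 : ℝ) {N M : ℕ} (ε : ℝ)
    (κ : Config N M → PMF (Config N M)) : Prop :=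
  (∀ (S : Config N M) (c : Node N M → Node N M), IsControl c →
      ENNReal.ofReal ε ≤ κ S (F p1 p2 p3 p4 S c)) ∧
  (∀ S : Config N M, ∑' S' : Rset p1 p2 p3 p4 S, κ S (S' : Config N M) = 1)

open Classical in
/-- The `W`-frozen controlled update. -/
noncomputable def FW (p1 p2 p3 p4 : ℝ) {N M : ℕ} (W : Set (Node N M))
    (S : Config N M) (c : Node N M → Node N M) : Config N M :=
  fun v => if v ∈ W then S v else F p1 p2 p3 p4 S c v

/-- The `W`-frozen one-step reach set `R_W(S)`. -/
def RsetW (p1 p2 p3 p4 : ℝ) {N M : ℕ} (W : Set (Node N M)) (S : Config N M) :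
    Set (Config N M) :=
  {S' | (∀ v ∈ W, S' v = S v) ∧
    ∀ v ∉ W, S' v = S v ∨
      ∃ u, adj u v ∧ S' v = S u ∧ payoff p1 p2 p3 p4 S v < payoff p1 p2 p3 p4 S u}

/-- Controlled trajectory of the `W`-frozen CEG. -/
noncomputable def trajW (p1 p2 p3 p4 : ℝ) {N M : ℕ} (W : Set (Node N M))
    (S0 : Config N M) (c : ℕ → Node N M → Node N M) : ℕ → Config N M
  | 0 => S0
  | t + 1 => FW p1 p2 p3 p4 W (trajW p1 p2 p3 p4 W S0 c t) (c t)

/-- `A` is reachable from `S0` under the `W`-frozen CEG within `T` steps. -/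
def ReachableWithinW (p1 p2 p3 p4 : ℝ) {N M : ℕ} (W : Set (Node N M))
    (A : Set (Config N M)) (S0 : Config N M) (T : ℕ) : Prop :=
  ∃ t ≤ T, ∃ c : ℕ → Node N M → Node N M,
    (∀ s, IsControl (c s)) ∧ trajW p1 p2 p3 p4 W S0 c t ∈ A

/-- A `W`-frozen admissible imitation kernel with margin `ε`. -/
def IsAdmissibleW (p1 p2 p3 p4 : ℝ) {N M : ℕ} (W : Set (Node N M)) (ε : ℝ)
    (κ : Config N M → PMF (Config N M)) : Prop :=
  (∀ (S : Config N M) (c : Node N M → Node N M), IsControl c →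
      ENNReal.ofReal ε ≤ κ S (FW p1 p2 p3 p4 W S c)) ∧
  (∀ S : Config N M, ∑' S' : RsetW p1 p2 p3 p4 W S, κ S (S' : Config N M) = 1)

/-!
Cooperation spreads from the frozen rectangle one layer at a time. A defector with a single
cooperating neighbour earns `p3 + 3 p4`, while a cooperator with at least two cooperating neighbours
earns at least `2 p1 + 2 p2 > p3 + 3 p4`. Hence from the configuration cooperating on a product
`I × J` of cyclic intervals of length at least two, a control can convert in one step all defectors
in the rows (or columns) bordering the product, provided none of them borders it on both sides.
Widening the row interval by two rows per step until it covers `ZMod N`, and then the column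
interval in the same way, takes `⌈(N - N₁)/2⌉ + ⌈(M - M₁)/2⌉` steps, an odd gap being first
reduced by a one-sided step. A gap of one is never closed this way, as its defectors border the
product on both sides.
-/

variable {N M : ℕ} {p1 p2 p3 p4 : ℝ}

section Grid

lemma adj_add_self (v : Node N M) {e : Node N M}
    (he : e = (1, 0) ∨ e = (-1, 0) ∨ e = (0, 1) ∨ e = (0, -1)) : adj (v + e) v := by
  simpa [adj] using he

lemma adj_of_mem_neighbors {u v : Node N M} (h : u ∈ neighbors v) : adj u v := by
  simp only [neighbors, Finset.mem_insert, Finset.mem_singleton] at h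
  rcases h with rfl | rfl | rfl | rfl <;> apply adj_add_self <;> simp

lemma coopCount_eq_sum (hN : 3 ≤ N) (hM : 3 ≤ M) (S : Config N M) (v : Node N M) :
    coopCount S v =
      (if S (v + (1, 0)) = Strat.C then 1 else 0) +
      (if S (v + (-1, 0)) = Strat.C then 1 else 0) +
      (if S (v + (0, 1)) = Strat.C then 1 else 0) +
      (if S (v + (0, -1)) = Strat.C then 1 else 0) := by
  have : Fact (2 < N) := ⟨hN⟩
  have : Fact (2 < M) := ⟨hM⟩
  have : Fact (1 < N) := ⟨by omega⟩
  have : Fact (1 < M) := ⟨by omega⟩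
  rw [coopCount, neighbors, Finset.card_filter, Finset.sum_insert, Finset.sum_insert,
    Finset.sum_insert, Finset.sum_singleton, ← add_assoc, ← add_assoc] <;>
    simp [Prod.ext_iff, ZMod.neg_one_ne_one.symm]

lemma coopCount_le_four (S : Config N M) (v : Node N M) : coopCount S v ≤ 4 :=
  (Finset.card_filter_le _ _).trans Finset.card_le_four

lemma payoff_lt_payoff (hp12 : p2 < p1) (hp : p3 + 3 * p4 < 2 * p1 + 2 * p2)
    {S : Config N M} {u v : Node N M} (hv : S v = Strat.D) (hkv : coopCount S v = 1)
    (hu : S u = Strat.C) (hku : 2 ≤ coopCount S u) :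
    payoff p1 p2 p3 p4 S v < payoff p1 p2 p3 p4 S u := by
  have hk2 : (2 : ℝ) ≤ coopCount S u := by exact_mod_cast hku
  have hk4 : (coopCount S u : ℝ) ≤ 4 := by exact_mod_cast coopCount_le_four S u
  rw [payoff, payoff, if_neg (by simp [hv]), if_pos hu, hkv]
  push_cast
  nlinarith

end Grid

section Control

lemma exists_control_FW_eq {W : Set (Node N M)} {S S' : Config N M}
    (hW : ∀ v ∈ W, S' v = S v)
    (h : ∀ v ∉ W, ∃ u, adj u v ∧ (S' v = S v ∧ S u = S v ∨
      S' v = S u ∧ payoff p1 p2 p3 p4 S v < payoff p1 p2 p3 p4 S u)) :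
    ∃ c, IsControl c ∧ FW p1 p2 p3 p4 W S c = S' := by
  classical
  have h' : ∀ v, ∃ u, adj u v ∧ (v ∉ W → (S' v = S v ∧ S u = S v ∨
      S' v = S u ∧ payoff p1 p2 p3 p4 S v < payoff p1 p2 p3 p4 S u)) := fun v =>
    if hv : v ∈ W then ⟨v + (1, 0), adj_add_self v (Or.inl rfl), fun h => absurd hv h⟩
    else (h v hv).imp fun _ hu => ⟨hu.1, fun _ => hu.2⟩
  choose c hadj hc using h'
  refine ⟨c, hadj, funext fun v => ?_⟩
  by_cases hv : v ∈ W
  · simp [FW, hv, hW v hv]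
  · rcases hc v hv with ⟨hS', hu⟩ | ⟨hS', hlt⟩
    · simp [FW, F, hv, hS', hu]
    · simp [FW, F, hv, hS', hlt]

lemma trajW_succ (W : Set (Node N M)) (S0 : Config N M) (c : ℕ → Node N M → Node N M)
    (t : ℕ) :
    trajW p1 p2 p3 p4 W S0 c (t + 1) =
      trajW p1 p2 p3 p4 W (FW p1 p2 p3 p4 W S0 (c 0)) (fun s => c (s + 1)) t := by
  induction t with
  | zero => rfl
  | succ t ih => exact congrArg (FW p1 p2 p3 p4 W · (c (t + 1))) ih

lemma ReachableWithinW.of_mem {W : Set (Node N M)} {A : Set (Config N M)} {S0 : Config N M}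
    (T : ℕ) (h : S0 ∈ A) : ReachableWithinW p1 p2 p3 p4 W A S0 T :=
  ⟨0, T.zero_le, fun _ v => v + (1, 0), fun _ v => adj_add_self v (Or.inl rfl), h⟩

lemma ReachableWithinW.of_FW {W : Set (Node N M)} {A : Set (Config N M)} {S0 : Config N M}
    {T : ℕ} {c0 : Node N M → Node N M} (hc0 : IsControl c0)
    (h : ReachableWithinW p1 p2 p3 p4 W A (FW p1 p2 p3 p4 W S0 c0) T) :
    ReachableWithinW p1 p2 p3 p4 W A S0 (T + 1) := by
  obtain ⟨t, ht, c, hc, hA⟩ := h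
  refine ⟨t + 1, by omega, fun s => Nat.casesOn s c0 fun s => c s,
    fun s => Nat.casesOn s hc0 fun s => hc s, ?_⟩
  rwa [trajW_succ]

end Control

section Rectangles

open Classical in
noncomputable def coopOn (s : Set (Node N M)) : Config N M :=
  fun v => if v ∈ s then Strat.C else Strat.D

lemma coopOn_eq_C {s : Set (Node N M)} {v : Node N M} : coopOn s v = Strat.C ↔ v ∈ s := by
  unfold coopOn; split_ifs with h <;> simp [h]

lemma coopOn_eq_D {s : Set (Node N M)} {v : Node N M} : coopOn s v = Strat.D ↔ v ∉ s := by
  unfold coopOn; split_ifs with h <;> simp [h]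

def NoIsolatedPoint {n : ℕ} (I : Set (ZMod n)) : Prop :=
  ∀ x ∈ I, x + 1 ∈ I ∨ x - 1 ∈ I

def IsGrowthStep {n : ℕ} (I I' : Set (ZMod n)) : Prop :=
  I ⊆ I' ∧ ∀ x ∈ I', x ∉ I → Xor (x + 1 ∈ I) (x - 1 ∈ I)

variable {I : Set (ZMod N)} {J : Set (ZMod M)}

open Classical in
lemma coopCount_coopOn_prod (hN : 3 ≤ N) (hM : 3 ≤ M) (x : ZMod N) (y : ZMod M) :
    coopCount (coopOn (I ×ˢ J)) (x, y) =
      (if x + 1 ∈ I ∧ y ∈ J then 1 else 0) + (if x - 1 ∈ I ∧ y ∈ J then 1 else 0) +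
      (if x ∈ I ∧ y + 1 ∈ J then 1 else 0) + (if x ∈ I ∧ y - 1 ∈ J then 1 else 0) := by
  simp only [coopCount_eq_sum hN hM, coopOn_eq_C, Prod.mk_add_mk, add_zero, ← sub_eq_add_neg,
    Set.mem_prod]

lemma two_le_coopCount_coopOn_prod (hN : 3 ≤ N) (hM : 3 ≤ M) (hI : NoIsolatedPoint I)
    (hJ : NoIsolatedPoint J) {v : Node N M} (hv : v ∈ I ×ˢ J) :
    2 ≤ coopCount (coopOn (I ×ˢ J)) v := by
  obtain ⟨hxI, hyJ⟩ := hv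
  have hx := hI v.1 hxI
  have hy := hJ v.2 hyJ
  rw [← Prod.mk.eta (p := v), coopCount_coopOn_prod hN hM]
  split_ifs <;> first | omega | tauto

lemma coopCount_coopOn_prod_of_growth_fst (hN : 3 ≤ N) (hM : 3 ≤ M) {x : ZMod N} {y : ZMod M}
    (hx : x ∉ I) (hy : y ∈ J) (hxor : Xor (x + 1 ∈ I) (x - 1 ∈ I)) :
    coopCount (coopOn (I ×ˢ J)) (x, y) = 1 := by
  rw [coopCount_coopOn_prod hN hM]
  rcases hxor with ⟨h1, h2⟩ | ⟨h1, h2⟩ <;> simp [hx, hy, h1, h2]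

lemma coopCount_coopOn_prod_of_growth_snd (hN : 3 ≤ N) (hM : 3 ≤ M) {x : ZMod N} {y : ZMod M}
    (hx : x ∈ I) (hy : y ∉ J) (hxor : Xor (y + 1 ∈ J) (y - 1 ∈ J)) :
    coopCount (coopOn (I ×ˢ J)) (x, y) = 1 := by
  rw [coopCount_coopOn_prod hN hM]
  rcases hxor with ⟨h1, h2⟩ | ⟨h1, h2⟩ <;> simp [hx, hy, h1, h2]

lemma exists_control_FW_coopOn_prod (hN : 3 ≤ N) (hM : 3 ≤ M) (hp12 : p2 < p1)
    (hp : p3 + 3 * p4 < 2 * p1 + 2 * p2) (hI : NoIsolatedPoint I) (hJ : NoIsolatedPoint J)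
    {W s : Set (Node N M)} (hW : W ⊆ I ×ˢ J) (hs : I ×ˢ J ⊆ s)
    (hnew : ∀ v ∈ s, v ∉ I ×ˢ J → coopCount (coopOn (I ×ˢ J)) v = 1) :
    ∃ c, IsControl c ∧ FW p1 p2 p3 p4 W (coopOn (I ×ˢ J)) c = coopOn s := by
  refine exists_control_FW_eq (fun v hv => ?_) fun v _ => ?_
  · rw [coopOn_eq_C.mpr (hs (hW hv)), coopOn_eq_C.mpr (hW hv)]
  by_cases hv : v ∈ I ×ˢ J
  · obtain ⟨x, y⟩ := v
    have hC : coopOn (I ×ˢ J) (x, y) = Strat.C := coopOn_eq_C.mpr hv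
    rw [coopOn_eq_C.mpr (hs hv), hC]
    rcases hI x hv.1 with hx | hx
    · exact ⟨(x, y) + (1, 0), adj_add_self _ (by simp),
        Or.inl ⟨rfl, coopOn_eq_C.mpr (by simpa using And.intro hx hv.2)⟩⟩
    · exact ⟨(x, y) + (-1, 0), adj_add_self _ (by simp),
        Or.inl ⟨rfl, coopOn_eq_C.mpr (by simpa [← sub_eq_add_neg] using And.intro hx hv.2)⟩⟩
  have hD : coopOn (I ×ˢ J) v = Strat.D := coopOn_eq_D.mpr hv
  by_cases hvs : v ∈ s
  · have hk := hnew v hvs hv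
    obtain ⟨u, hu, huC⟩ : ∃ u ∈ neighbors v, coopOn (I ×ˢ J) u = Strat.C :=
      Finset.card_pos.mp (by rw [← coopCount, hk]; omega) |>.imp fun _ h => Finset.mem_filter.mp h
    refine ⟨u, adj_of_mem_neighbors hu, Or.inr ⟨?_, payoff_lt_payoff hp12 hp hD hk huC ?_⟩⟩
    · rw [coopOn_eq_C.mpr hvs, huC]
    · exact two_le_coopCount_coopOn_prod hN hM hI hJ (coopOn_eq_C.mp huC)
  rw [coopOn_eq_D.mpr hvs, hD]
  obtain ⟨x, y⟩ := v
  by_cases hx : x ∈ I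
  · exact ⟨(x, y) + (1, 0), adj_add_self _ (by simp), Or.inl ⟨rfl, coopOn_eq_D.mpr
      (by simp_all)⟩⟩
  · exact ⟨(x, y) + (0, 1), adj_add_self _ (by simp), Or.inl ⟨rfl, coopOn_eq_D.mpr
      (by simp_all)⟩⟩

variable {W : Set (Node N M)} {A : Set (Config N M)} {T : ℕ}

lemma ReachableWithinW.of_growthStep_fst (hN : 3 ≤ N) (hM : 3 ≤ M) (hp12 : p2 < p1)
    (hp : p3 + 3 * p4 < 2 * p1 + 2 * p2) (hI : NoIsolatedPoint I) (hJ : NoIsolatedPoint J)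
    {I' : Set (ZMod N)} (hII' : IsGrowthStep I I') (hW : W ⊆ I ×ˢ J)
    (h : ReachableWithinW p1 p2 p3 p4 W A (coopOn (I' ×ˢ J)) T) :
    ReachableWithinW p1 p2 p3 p4 W A (coopOn (I ×ˢ J)) (T + 1) := by
  obtain ⟨c, hc, hFW⟩ := exists_control_FW_coopOn_prod (s := I' ×ˢ J) hN hM hp12 hp hI hJ hW
    (Set.prod_mono hII'.1 le_rfl) fun v hv hvIJ =>
      coopCount_coopOn_prod_of_growth_fst hN hM (fun hx => hvIJ ⟨hx, hv.2⟩) hv.2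
        (hII'.2 v.1 hv.1 fun hx => hvIJ ⟨hx, hv.2⟩)
  exact ReachableWithinW.of_FW hc (hFW ▸ h)

lemma ReachableWithinW.of_growthStep_snd (hN : 3 ≤ N) (hM : 3 ≤ M) (hp12 : p2 < p1)
    (hp : p3 + 3 * p4 < 2 * p1 + 2 * p2) (hI : NoIsolatedPoint I) (hJ : NoIsolatedPoint J)
    {J' : Set (ZMod M)} (hJJ' : IsGrowthStep J J') (hW : W ⊆ I ×ˢ J)
    (h : ReachableWithinW p1 p2 p3 p4 W A (coopOn (I ×ˢ J')) T) :
    ReachableWithinW p1 p2 p3 p4 W A (coopOn (I ×ˢ J)) (T + 1) := by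
  obtain ⟨c, hc, hFW⟩ := exists_control_FW_coopOn_prod (s := I ×ˢ J') hN hM hp12 hp hI hJ hW
    (Set.prod_mono le_rfl hJJ'.1) fun v hv hvIJ =>
      coopCount_coopOn_prod_of_growth_snd hN hM hv.1 (fun hy => hvIJ ⟨hv.1, hy⟩)
        (hJJ'.2 v.2 hv.2 fun hy => hvIJ ⟨hv.1, hy⟩)
  exact ReachableWithinW.of_FW hc (hFW ▸ h)

end Rectangles

section Arcs

variable {n : ℕ}

def arc (a : ZMod n) (L : ℕ) : Set (ZMod n) := {x | ∃ k < L, x = a + k}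

lemma add_mem_arc (a : ZMod n) {k L : ℕ} (hk : k < L) : a + k ∈ arc a L := ⟨k, hk, rfl⟩

lemma arc_self [NeZero n] (a : ZMod n) : arc a n = Set.univ :=
  Set.eq_univ_of_forall fun x => ⟨(x - a).val, ZMod.val_lt _, by simp⟩

lemma noIsolatedPoint_arc (a : ZMod n) {L : ℕ} (hL : 2 ≤ L) : NoIsolatedPoint (arc a L) := by
  rintro _ ⟨k, hk, rfl⟩
  rcases Nat.eq_zero_or_pos k with rfl | hk0
  · exact Or.inl ⟨1, by omega, by simp⟩
  · exact Or.inr ⟨k - 1, by omega, by rw [Nat.cast_pred hk0]; ring⟩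

lemma add_succ_notMem_arc (a : ZMod n) {L : ℕ} (hLn : L + 2 ≤ n) :
    a + L + 1 ∉ arc a L := by
  rintro ⟨k, hk, h⟩
  have : ((L + 1 : ℕ) : ZMod n) = k := by push_cast; linear_combination h
  rw [ZMod.natCast_eq_natCast_iff', Nat.mod_eq_of_lt (by omega),
    Nat.mod_eq_of_lt (by omega)] at this
  omega

lemma sub_two_notMem_arc (a : ZMod n) {L : ℕ} (hLn : L + 2 ≤ n) :
    a - 1 - 1 ∉ arc a L := by
  rintro ⟨k, hk, h⟩
  have : ((k + 2 : ℕ) : ZMod n) = 0 := by push_cast; linear_combination -h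
  have := Nat.le_of_dvd (by omega) ((ZMod.natCast_eq_zero_iff _ _).mp this)
  omega

lemma xor_mem_arc_right_end (a : ZMod n) {L : ℕ} (hL : 1 ≤ L) (hLn : L + 2 ≤ n) :
    Xor (a + L + 1 ∈ arc a L) (a + L - 1 ∈ arc a L) :=
  Or.inr ⟨⟨L - 1, by omega, by rw [Nat.cast_pred hL]; ring⟩, add_succ_notMem_arc a hLn⟩

lemma xor_mem_arc_left_end (a : ZMod n) {L : ℕ} (hL : 1 ≤ L) (hLn : L + 2 ≤ n) :
    Xor (a - 1 + 1 ∈ arc a L) (a - 1 - 1 ∈ arc a L) :=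
  Or.inl ⟨⟨0, hL, by simp⟩, sub_two_notMem_arc a hLn⟩

lemma isGrowthStep_arc_succ (a : ZMod n) {L : ℕ} (hL : 1 ≤ L) (hLn : L + 2 ≤ n) :
    IsGrowthStep (arc a L) (arc a (L + 1)) := by
  refine ⟨fun x ⟨k, hk, hx⟩ => ⟨k, by omega, hx⟩, ?_⟩
  rintro _ ⟨k, hk, rfl⟩ hnew
  obtain rfl : k = L := by
    by_contra hkL
    exact hnew (add_mem_arc a (by omega))
  exact xor_mem_arc_right_end a hL hLn

lemma isGrowthStep_arc_pred (a : ZMod n) {L : ℕ} (hL : 1 ≤ L) (hLn : L + 2 ≤ n) :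
    IsGrowthStep (arc a L) (arc (a - 1) (L + 2)) := by
  refine ⟨fun x ⟨k, hk, hx⟩ => ⟨k + 1, by omega, by rw [hx]; push_cast; ring⟩, ?_⟩
  rintro _ ⟨k, hk, rfl⟩ hnew
  rcases Nat.eq_zero_or_pos k with rfl | hk0
  · simpa using xor_mem_arc_left_end a hL hLn
  obtain rfl : k = L + 1 := by
    by_contra hkL
    exact hnew ⟨k - 1, by omega, by rw [Nat.cast_pred hk0]; ring⟩
  convert xor_mem_arc_right_end a hL hLn using 3 <;> push_cast <;> ring

lemma arc_induction [NeZero n] {R : Set (ZMod n) → ℕ → Prop}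
    (hstep : ∀ I I' T, NoIsolatedPoint I → IsGrowthStep I I' → R I' T → R I (T + 1))
    {T : ℕ} (huniv : R Set.univ T) (a : ZMod n) {L : ℕ} (hL : 2 ≤ L) (hLn : L ≤ n)
    (hgap : n - L ≠ 1) :
    R (arc a L) ((n - L + 1) / 2 + T) := by
  induction h : n - L using Nat.strong_induction_on generalizing a L with
  | _ g ih =>
    subst h
    rcases Nat.lt_or_ge (n - L) 2 with hg | hg
    · obtain rfl : L = n := by omega
      simpa [arc_self] using huniv
    rcases Nat.even_or_odd (n - L) with heven | hodd
    · have := ih (n - (L + 2)) (by omega) (a - 1) (by omega) (by omega)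
        (by rcases heven with ⟨m, hm⟩; omega) rfl
      rw [show (n - L + 1) / 2 + T = (n - (L + 2) + 1) / 2 + T + 1 by omega]
      exact hstep _ _ _ (noIsolatedPoint_arc a hL) (isGrowthStep_arc_pred a (by omega) (by omega))
        this
    · have := ih (n - (L + 1)) (by omega) a (by omega) (by omega)
        (by rcases hodd with ⟨m, hm⟩; omega) rfl
      rw [show (n - L + 1) / 2 + T = (n - (L + 1) + 1) / 2 + T + 1 by
        rcases hodd with ⟨m, hm⟩; omega]
      exact hstep _ _ _ (noIsolatedPoint_arc a hL) (isGrowthStep_arc_succ a (by omega) (by omega))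
        this

lemma setOf_eq_arc_prod_arc (a₀ : ZMod N) (b₀ : ZMod M) (K L : ℕ) :
    {w : Node N M | ∃ a < K, ∃ b < L, w = (a₀ + (a : ZMod N), b₀ + (b : ZMod M))} =
      arc a₀ K ×ˢ arc b₀ L := by
  ext ⟨x, y⟩
  simp only [arc, Set.mem_prod, Set.mem_ofPred_eq, Prod.mk.injEq]
  exact ⟨fun ⟨a, ha, b, hb, hx, hy⟩ => ⟨⟨a, ha, hx⟩, b, hb, hy⟩,
    fun ⟨⟨a, ha, hx⟩, b, hb, hy⟩ => ⟨a, ha, b, hb, hx, hy⟩⟩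

end Arcs

section Phases

variable {W : Set (Node N M)}

lemma ReachableWithinW.coopOn_univ_prod_arc [NeZero M] (hN : 3 ≤ N) (hM : 3 ≤ M) (hp12 : p2 < p1)
    (hp : p3 + 3 * p4 < 2 * p1 + 2 * p2) (b₀ : ZMod M) {L : ℕ} (hL : 2 ≤ L) (hLM : L ≤ M)
    (hgap : M - L ≠ 1) (hW : W ⊆ Set.univ ×ˢ arc b₀ L) :
    ReachableWithinW p1 p2 p3 p4 W {fun _ => Strat.C} (coopOn (Set.univ ×ˢ arc b₀ L))
      ((M - L + 1) / 2) :=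
  arc_induction (R := fun J T => W ⊆ Set.univ ×ˢ J →
      ReachableWithinW p1 p2 p3 p4 W {fun _ => Strat.C} (coopOn (Set.univ ×ˢ J)) T)
    (fun _ _ _ hJ hJJ' ih hWJ => .of_growthStep_snd hN hM hp12 hp (fun _ _ => Or.inl trivial)
      hJ hJJ' hWJ (ih (hWJ.trans (Set.prod_mono le_rfl hJJ'.1))))
    (fun _ => .of_mem 0 (funext fun _ => coopOn_eq_C.mpr ⟨trivial, trivial⟩))
    b₀ hL hLM hgap hW

lemma ReachableWithinW.coopOn_arc_prod [NeZero N] (hN : 3 ≤ N) (hM : 3 ≤ M) (hp12 : p2 < p1)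
    (hp : p3 + 3 * p4 < 2 * p1 + 2 * p2) {A : Set (Config N M)} {J : Set (ZMod M)}
    (hJ : NoIsolatedPoint J) {T : ℕ}
    (hfull : ReachableWithinW p1 p2 p3 p4 W A (coopOn (Set.univ ×ˢ J)) T)
    (a₀ : ZMod N) {K : ℕ} (hK : 2 ≤ K) (hKN : K ≤ N) (hgap : N - K ≠ 1)
    (hW : W ⊆ arc a₀ K ×ˢ J) :
    ReachableWithinW p1 p2 p3 p4 W A (coopOn (arc a₀ K ×ˢ J)) ((N - K + 1) / 2 + T) :=
  arc_induction (R := fun I T => W ⊆ I ×ˢ J →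
      ReachableWithinW p1 p2 p3 p4 W A (coopOn (I ×ˢ J)) T)
    (fun _ _ _ hI hII' ih hWI => .of_growthStep_fst hN hM hp12 hp hI hJ hII' hWI
      (ih (hWI.trans (Set.prod_mono hII'.1 le_rfl))))
    (fun _ => hfull) a₀ hK hKN hgap hW

end Phases

/-- with `N, M ≥ 5`, a rectangular `N₁ × M₁` frozen-cooperation
set `W`, and the stated payoff conditions, the all-cooperation configuration is
reachable from `S*` under the `W`-frozen CEG within
`⌈(N − N₁)/2⌉ + ⌈(M − M₁)/2⌉` steps. -/
theorem frozen_rect_reachable_coop {N M : ℕ} (hN : 5 ≤ N) (hM : 5 ≤ M)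
    (N1 M1 : ℕ)
    (hN1 : (2 ≤ N1 ∧ N1 + 3 ≤ N) ∨ N1 = N)
    (hM1 : (2 ≤ M1 ∧ M1 + 3 ≤ M) ∨ M1 = M)
    (i0 : ZMod N) (j0 : ZMod M)
    (W : Set (Node N M))
    (hW : W = {w : Node N M |
      ∃ a < N1, ∃ b < M1, w = (i0 + (a : ZMod N), j0 + (b : ZMod M))})
    (p1 p2 p3 p4 : ℝ)
    (hcase : (p3 > p1 ∧ p1 > p4 ∧ p4 > p2 ∧ 2 * p1 + 2 * p2 > p3 + 3 * p4) ∨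
      (p3 > p1 ∧ p1 > p2 ∧ p2 > p4 ∧ 2 * p3 + 2 * p4 > 2 * p1 + 2 * p2 ∧
        2 * p1 + 2 * p2 > p3 + 3 * p4 ∧ p3 + 3 * p4 > 4 * p2))
    (Sstar : Config N M)
    (hSstarC : ∀ v ∈ W, Sstar v = Strat.C) (hSstarD : ∀ v ∉ W, Sstar v = Strat.D) :
    ReachableWithinW p1 p2 p3 p4 W ({fun _ => Strat.C} : Set (Config N M)) Sstar
      ((N - N1 + 1) / 2 + (M - M1 + 1) / 2) := by
  have : NeZero N := ⟨by omega⟩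
  have : NeZero M := ⟨by omega⟩
  obtain ⟨hp12, hp⟩ : p2 < p1 ∧ p3 + 3 * p4 < 2 * p1 + 2 * p2 := by
    rcases hcase with ⟨-, h1, h2, h3⟩ | ⟨-, h1, -, -, h2, -⟩ <;> constructor <;> linarith
  rw [setOf_eq_arc_prod_arc] at hW
  obtain rfl : Sstar = coopOn W := funext fun v => by
    by_cases hv : v ∈ W
    · rw [hSstarC v hv, coopOn_eq_C.mpr hv]
    · rw [hSstarD v hv, coopOn_eq_D.mpr hv]
  subst hW
  have hcols := ReachableWithinW.coopOn_univ_prod_arc (W := arc i0 N1 ×ˢ arc j0 M1)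
    (by omega) (by omega) hp12 hp j0 (by omega) (by omega) (by omega)
    (Set.prod_mono (Set.subset_univ _) le_rfl)
  exact hcols.coopOn_arc_prod (by omega) (by omega) hp12 hp
    (noIsolatedPoint_arc j0 (by omega)) i0 (by omega) (by omega) (by omega) le_rfl

end EvolGame
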